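/- Let CT be a caterpillar of length k ≥ 1 in which every stem has at most two pendent neighbours. Then β_b(CT) = 2k + 2 = 2(diam(CT) − 1). -/

import Mathlib

open SimpleGraph Finset
open scoped Classical

variable {V : Type*}

noncomputable def ecc [Fintype V] (G : SimpleGraph V) (v : V) : ℕ :=
  Finset.univ.sup (fun u => G.dist v u)

noncomputable def gdiam [Fintype V] (G : SimpleGraph V) : ℕ :=
  Finset.univ.sup (fun v => ecc G v)

def IsIndepBroadcast [Fintype V] (G : SimpleGraph V) (f : V → ℕ) : Prop :=
  (∀ v, f v ≤ ecc G v) ∧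
  ∀ u v, u ≠ v → 0 < f u → 0 < f v → max (f u) (f v) < G.dist u v

def cost [Fintype V] (f : V → ℕ) : ℕ := ∑ v, f v

noncomputable def betaB [Fintype V] (G : SimpleGraph V) : ℕ :=
  sSup {c | ∃ f, IsIndepBroadcast G f ∧ cost f = c}

abbrev CatV (k : ℕ) (lam : Fin (k+1) → ℕ) := Fin (k+1) ⊕ (Σ i : Fin (k+1), Fin (lam i))

def caterpillar (k : ℕ) (lam : Fin (k+1) → ℕ) : SimpleGraph (CatV k lam) :=
  SimpleGraph.fromRel (fun u v => match u, v with
    | Sum.inl i, Sum.inl j => (i : ℕ) + 1 = (j : ℕ)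
    | Sum.inl i, Sum.inr p => i = p.1
    | _, _ => False)

def numLeaves (k : ℕ) (lam : Fin (k+1) → ℕ) : ℕ := ∑ i, lam i

def numTrunks (k : ℕ) (lam : Fin (k+1) → ℕ) : ℕ :=
  (Finset.univ.filter (fun i : Fin (k+1) => lam i = 0)).card

def noAdjTrunks (k : ℕ) (lam : Fin (k+1) → ℕ) : Prop :=
  ∀ i j : Fin (k+1), (i : ℕ) + 1 = (j : ℕ) → ¬(lam i = 0 ∧ lam j = 0)

def fstar (k : ℕ) (lam : Fin (k+1) → ℕ) (f : CatV k lam → ℕ) (i : Fin (k+1)) : ℕ :=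
  f (Sum.inl i) + ∑ j, f (Sum.inr ⟨i, j⟩)

/-!
The leaves hanging at the two ends of the spine are at distance `k + 2`, so broadcasting `k + 1`
from each of them is independent; every eccentricity is at most `k + 2`, which also gives the
diameter.

For the upper bound, group the broadcast by spine columns. Distances exceed column distances by at
most 2, so two broadcasting vertices satisfy `max (f u) (f v) ≤ |col u - col v| + 1`. A column
holding two broadcasting vertices therefore holds only leaves (with value 1), hence at most two of
them, so the weight of an occupied column is at most its distance to any other occupied column
plus 1, and at most `k + 2` by the eccentricity bound. Adding up the occupied columns from left to
right gives at most `2k + 2`.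
-/

theorem Finset.sum_le_two_mul_add_two_of_nontrivial {I : Finset ℕ} {W : ℕ → ℕ} {M : ℕ}
    (hI : I.Nontrivial) (hM : ∀ i ∈ I, i ≤ M)
    (hW : ∀ i ∈ I, ∀ j ∈ I, i ≠ j → W i ≤ Nat.dist i j + 1) :
    ∑ i ∈ I, W i ≤ 2 * M + 2 := by
  induction I using Finset.induction_on_max generalizing M with
  | empty => exact absurd hI (by simp)
  | insert a s hlt ih =>
    have haM := hM a (mem_insert_self a s)
    have hgap : ∀ b ∈ s, W a ≤ a - b + 1 ∧ W b ≤ a - b + 1 := fun b hb => by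
      have hab := hW a (mem_insert_self a s) b (mem_insert_of_mem hb) (hlt b hb).ne'
      have hba := hW b (mem_insert_of_mem hb) a (mem_insert_self a s) (hlt b hb).ne
      have := hlt b hb
      simp only [Nat.dist] at hab hba
      omega
    rw [sum_insert fun h => lt_irrefl a (hlt a h)]
    rcases s.eq_empty_or_nonempty with rfl | hne
    · simp at hI
    rcases hne.exists_eq_singleton_or_nontrivial with ⟨b, rfl⟩ | hs
    · have := hgap b (mem_singleton_self b)
      rw [sum_singleton]
      omega
    · have hb := s.max'_mem hne
      have := hgap _ hb
      have := hlt _ hb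
      have := ih (M := s.max' hne) hs (fun i hi => s.le_max' i hi)
        (fun i hi j hj => hW i (mem_insert_of_mem hi) j (mem_insert_of_mem hj))
      omega

theorem Finset.sum_le_two_mul_add_two {I : Finset ℕ} {W : ℕ → ℕ} {M : ℕ}
    (hM : ∀ i ∈ I, i ≤ M) (hWM : ∀ i ∈ I, W i ≤ 2 * M + 2)
    (hW : ∀ i ∈ I, ∀ j ∈ I, i ≠ j → W i ≤ Nat.dist i j + 1) :
    ∑ i ∈ I, W i ≤ 2 * M + 2 := by
  rcases I.eq_empty_or_nonempty with rfl | hne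
  · simp
  rcases hne.exists_eq_singleton_or_nontrivial with ⟨i, rfl⟩ | hI
  · simpa using hWM i (mem_singleton_self i)
  · exact sum_le_two_mul_add_two_of_nontrivial hI hM hW

section Broadcast

variable [Fintype V] {G : SimpleGraph V} {f : V → ℕ}

theorem dist_le_ecc (G : SimpleGraph V) (u v : V) : G.dist u v ≤ ecc G u :=
  Finset.le_sup (f := fun v => G.dist u v) (mem_univ v)

theorem ecc_le_gdiam (G : SimpleGraph V) (v : V) : ecc G v ≤ gdiam G :=
  Finset.le_sup (f := ecc G) (mem_univ v)

theorem IsIndepBroadcast.not_adj (hf : IsIndepBroadcast G f) {u v : V} (huv : u ≠ v)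
    (hu : f u ≠ 0) (hv : f v ≠ 0) : ¬G.Adj u v := by
  intro hadj
  have := hf.2 u v huv (Nat.pos_of_ne_zero hu) (Nat.pos_of_ne_zero hv)
  rw [dist_eq_one_iff_adj.2 hadj] at this
  omega

theorem isIndepBroadcast_pair {u v : V} {r : ℕ} (huv : u ≠ v) (hr : r < G.dist u v) :
    IsIndepBroadcast G (fun w => if w ∈ ({u, v} : Finset V) then r else 0) := by
  refine ⟨fun w => ?_, fun x y hxy hx hy => ?_⟩ <;> dsimp only at *
  · split_ifs with hw
    · simp only [mem_insert, mem_singleton] at hw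
      rcases hw with rfl | rfl
      · exact hr.le.trans (dist_le_ecc G w v)
      · exact hr.le.trans (SimpleGraph.dist_comm.trans_le (dist_le_ecc G w u))
    · exact Nat.zero_le _
  · split_ifs at hx hy ⊢ with hx' hy'
    · simp only [mem_insert, mem_singleton] at hx' hy'
      rcases hx' with rfl | rfl <;> rcases hy' with rfl | rfl
      all_goals first | exact absurd rfl hxy | simpa [SimpleGraph.dist_comm] using hr
    all_goals simp at hx hy

theorem cost_pair {u v : V} (huv : u ≠ v) (r : ℕ) :
    cost (fun w => if w ∈ ({u, v} : Finset V) then r else 0) = 2 * r := by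
  rw [cost, sum_ite_mem, univ_inter, sum_const, card_pair huv, smul_eq_mul]

theorem betaB_eq_of_forall_cost_le {c : ℕ} (hf : IsIndepBroadcast G f) (hc : cost f = c)
    (hle : ∀ g, IsIndepBroadcast G g → cost g ≤ c) : betaB G = c :=
  IsGreatest.csSup_eq ⟨⟨f, hf, hc⟩, by rintro _ ⟨g, hg, rfl⟩; exact hle g hg⟩

end Broadcast

theorem SimpleGraph.Walk.sub_le_length {G : SimpleGraph V} {φ : V → ℤ}
    (hφ : ∀ ⦃x y⦄, G.Adj x y → φ x - φ y ≤ 1) {u v : V} (p : G.Walk u v) :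
    φ u - φ v ≤ p.length := by
  induction p with
  | nil => simp
  | cons h p ih =>
    rw [length_cons]
    have := hφ h
    push_cast
    linarith

theorem SimpleGraph.Reachable.sub_le_dist {G : SimpleGraph V} {φ : V → ℤ}
    (hφ : ∀ ⦃x y⦄, G.Adj x y → φ x - φ y ≤ 1) {u v : V} (h : G.Reachable u v) :
    φ u - φ v ≤ G.dist u v := by
  obtain ⟨p, hp⟩ := h.exists_walk_length_eq_dist
  exact hp ▸ p.sub_le_length hφ

namespace Caterpillar

variable {k : ℕ} {lam : Fin (k+1) → ℕ}

def col : CatV k lam → Fin (k+1)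
  | .inl i => i
  | .inr p => p.1

theorem adj_inl_inl {i j : Fin (k+1)} (h : (i : ℕ) + 1 = j) :
    (caterpillar k lam).Adj (.inl i) (.inl j) := by
  rw [caterpillar, fromRel_adj]
  exact ⟨by simp [Fin.ext_iff]; omega, .inl h⟩

theorem adj_inl_inr (p : Σ i : Fin (k+1), Fin (lam i)) :
    (caterpillar k lam).Adj (.inl p.1) (.inr p) := by
  rw [caterpillar, fromRel_adj]
  exact ⟨by simp, .inl rfl⟩

theorem exists_walk_inl_inl_of_le {i j : Fin (k+1)} (h : i ≤ j) :
    ∃ p : (caterpillar k lam).Walk (.inl i) (.inl j), p.length = j - i := by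
  obtain ⟨n, hn⟩ := Nat.exists_eq_add_of_le (Fin.le_def.1 h)
  induction n generalizing j with
  | zero =>
    obtain rfl : j = i := Fin.ext (by simpa using hn)
    exact ⟨.nil, by simp⟩
  | succ n ih =>
    obtain ⟨p, hp⟩ := ih (j := ⟨i + n, by omega⟩) (Fin.le_def.2 (by simp)) rfl
    exact ⟨p.concat (adj_inl_inl (by simp; omega)), by simp [hp]; omega⟩

theorem exists_walk_inl_inl (i j : Fin (k+1)) :
    ∃ p : (caterpillar k lam).Walk (.inl i) (.inl j), p.length = Nat.dist i j := by
  rcases le_total i j with h | h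
  · obtain ⟨p, hp⟩ := exists_walk_inl_inl_of_le (lam := lam) h
    exact ⟨p, by rw [hp, Nat.dist]; omega⟩
  · obtain ⟨p, hp⟩ := exists_walk_inl_inl_of_le (lam := lam) h
    exact ⟨p.reverse, by rw [Walk.length_reverse, hp, Nat.dist]; omega⟩

theorem exists_walk_inl_col (u : CatV k lam) :
    ∃ p : (caterpillar k lam).Walk u (.inl (col u)), p.length ≤ 1 := by
  cases u with
  | inl i => exact ⟨.nil, Nat.zero_le 1⟩
  | inr p => exact ⟨.cons (adj_inl_inr p).symm .nil, le_rfl⟩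

theorem exists_walk_length_le (u v : CatV k lam) :
    ∃ p : (caterpillar k lam).Walk u v, p.length ≤ Nat.dist (col u) (col v) + 2 := by
  obtain ⟨p, hp⟩ := exists_walk_inl_col u
  obtain ⟨q, hq⟩ := exists_walk_inl_col v
  obtain ⟨r, hr⟩ := exists_walk_inl_inl (lam := lam) (col u) (col v)
  refine ⟨p.append (r.append q.reverse), ?_⟩
  simp only [Walk.length_append, Walk.length_reverse]
  omega

theorem reachable (u v : CatV k lam) : (caterpillar k lam).Reachable u v :=
  (exists_walk_length_le u v).elim fun p _ => ⟨p⟩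

theorem dist_le (u v : CatV k lam) :
    (caterpillar k lam).dist u v ≤ Nat.dist (col u) (col v) + 2 :=
  (exists_walk_length_le u v).elim fun p hp => (SimpleGraph.dist_le p).trans hp

theorem ecc_le (v : CatV k lam) : ecc (caterpillar k lam) v ≤ k + 2 :=
  Finset.sup_le fun u _ => (dist_le v u).trans <| by
    have := (col u).is_le; have := (col v).is_le; simp only [Nat.dist]; omega

-- Changes by at most 1 along edges and puts the end leaves one step beyond the spine.
def pos : CatV k lam → ℤ
  | .inl i => i
  | .inr p => if p.1 = 0 then -1 else if p.1 = Fin.last k then k + 1 else p.1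

theorem pos_sub_pos_le_one {x y : CatV k lam} (h : (caterpillar k lam).Adj x y) :
    pos x - pos y ≤ 1 := by
  rw [caterpillar, fromRel_adj] at h
  obtain ⟨-, h | h⟩ := h <;> rcases x with i | p <;> rcases y with j | q <;> simp at h <;>
    simp only [pos] <;> try subst h
  all_goals first | omega | (split_ifs <;> simp_all)

theorem add_two_le_dist_leaf_leaf (hk : 1 ≤ k) (h0 : 0 < lam 0) (hl : 0 < lam (Fin.last k)) :
    k + 2 ≤ (caterpillar k lam).dist (.inr ⟨0, ⟨0, h0⟩⟩) (.inr ⟨Fin.last k, ⟨0, hl⟩⟩) := by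
  have := (reachable (lam := lam) (.inr ⟨Fin.last k, ⟨0, hl⟩⟩) (.inr ⟨0, ⟨0, h0⟩⟩)).sub_le_dist
    fun _ _ => pos_sub_pos_le_one
  have hlast : Fin.last k ≠ 0 := by simp [Fin.ext_iff]; omega
  simp only [pos, hlast, if_true, if_false] at this
  rw [SimpleGraph.dist_comm]
  omega

def colWeight (f : CatV k lam → ℕ) (i : ℕ) : ℕ := ∑ v with (col v : ℕ) = i, f v

section Broadcast

variable {f : CatV k lam → ℕ}

theorem max_le_dist_col_add_one (hf : IsIndepBroadcast (caterpillar k lam) f) {u v : CatV k lam}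
    (huv : u ≠ v) (hu : f u ≠ 0) (hv : f v ≠ 0) :
    max (f u) (f v) ≤ Nat.dist (col u) (col v) + 1 := by
  have := hf.2 u v huv (Nat.pos_of_ne_zero hu) (Nat.pos_of_ne_zero hv)
  have := dist_le u v
  omega

theorem exists_eq_inr_of_not_adj {x y : CatV k lam} {i : Fin (k+1)} (hxy : x ≠ y)
    (hx : col x = i) (hy : col y = i) (hna : ¬(caterpillar k lam).Adj x y) :
    ∃ j : Fin (lam i), x = .inr ⟨i, j⟩ := by
  rcases x with i' | ⟨i', j⟩ <;> simp only [col] at hx <;> subst hx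
  · rcases y with j' | p <;> simp only [col] at hy <;> subst hy
    · exact absurd rfl hxy
    · exact absurd (adj_inl_inr p) hna
  · exact ⟨j, rfl⟩

theorem colWeight_le (hlam : ∀ i, lam i ≤ 2) (hf : IsIndepBroadcast (caterpillar k lam) f)
    {u : CatV k lam} (hu : f u ≠ 0) : colWeight f (col u) ≤ max (f u) 2 := by
  set C := (univ.filter fun v => (col v : ℕ) = col u).filter fun v => f v ≠ 0
  have hC : ∀ x, x ∈ C ↔ col x = col u ∧ f x ≠ 0 := by simp [C, Fin.val_inj]
  rw [colWeight, ← sum_filter_ne_zero]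
  by_cases hsingle : ∀ x ∈ C, x = u
  · calc ∑ x ∈ C, f x ≤ ∑ x ∈ {u}, f x :=
          sum_le_sum_of_subset fun x hx => mem_singleton.2 (hsingle x hx)
      _ ≤ max (f u) 2 := by simp
  push Not at hsingle
  obtain ⟨w, hw, hwu⟩ := hsingle
  have hother : ∀ x ∈ C, ∃ y ∈ C, y ≠ x := fun x hx => by
    by_cases hxu : x = u
    · exact ⟨w, hw, hxu ▸ hwu⟩
    · exact ⟨u, (hC u).2 ⟨rfl, hu⟩, Ne.symm hxu⟩
  have hsep : ∀ x ∈ C, ∀ y ∈ C, y ≠ x → f x ≤ 1 ∧ ¬(caterpillar k lam).Adj x y := by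
    intro x hx y hy hyx
    obtain ⟨hxc, hx0⟩ := (hC x).1 hx
    obtain ⟨hyc, hy0⟩ := (hC y).1 hy
    have := max_le_dist_col_add_one hf hyx.symm hx0 hy0
    rw [hxc, hyc, Nat.dist_self] at this
    exact ⟨by omega, hf.not_adj hyx.symm hx0 hy0⟩
  have hleaves : C ⊆ univ.image fun j : Fin (lam (col u)) => (.inr ⟨col u, j⟩ : CatV k lam) := by
    intro x hx
    obtain ⟨y, hy, hyx⟩ := hother x hx
    obtain ⟨j, rfl⟩ := exists_eq_inr_of_not_adj hyx.symm ((hC x).1 hx).1 ((hC y).1 hy).1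
      (hsep x hx y hy hyx).2
    exact mem_image_of_mem _ (mem_univ j)
  calc ∑ x ∈ C, f x ≤ ∑ _x ∈ C, 1 := sum_le_sum fun x hx => (hother x hx).elim
          fun y hy => (hsep x hx y hy.1 hy.2).1
    _ = C.card := by simp
    _ ≤ (univ : Finset (Fin (lam (col u)))).card := (card_le_card hleaves).trans card_image_le
    _ ≤ max (f u) 2 := by simpa using (hlam (col u)).trans (le_max_right _ _)

theorem exists_col_eq_of_colWeight_ne_zero {i : ℕ} (h : colWeight f i ≠ 0) :
    ∃ u, (col u : ℕ) = i ∧ f u ≠ 0 := by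
  obtain ⟨u, hu, hu0⟩ := exists_ne_zero_of_sum_ne_zero h
  exact ⟨u, (mem_filter.1 hu).2, hu0⟩

theorem colWeight_le_add_two (hlam : ∀ i, lam i ≤ 2) (hf : IsIndepBroadcast (caterpillar k lam) f)
    {i : ℕ} (hi : colWeight f i ≠ 0) : colWeight f i ≤ k + 2 := by
  obtain ⟨u, rfl, hu⟩ := exists_col_eq_of_colWeight_ne_zero hi
  exact (colWeight_le hlam hf hu).trans (max_le ((hf.1 u).trans (ecc_le u)) (by omega))

theorem colWeight_le_dist_add_one (hlam : ∀ i, lam i ≤ 2)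
    (hf : IsIndepBroadcast (caterpillar k lam) f) {i j : ℕ} (hij : i ≠ j)
    (hi : colWeight f i ≠ 0) (hj : colWeight f j ≠ 0) : colWeight f i ≤ Nat.dist i j + 1 := by
  obtain ⟨u, rfl, hu⟩ := exists_col_eq_of_colWeight_ne_zero hi
  obtain ⟨v, rfl, hv⟩ := exists_col_eq_of_colWeight_ne_zero hj
  have := max_le_dist_col_add_one hf (by rintro rfl; exact hij rfl) hu hv
  have := colWeight_le hlam hf hu
  simp only [Nat.dist] at *
  omega

theorem cost_eq_sum_colWeight (f : CatV k lam → ℕ) :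
    cost f = ∑ i ∈ range (k+1), colWeight f i :=
  (sum_fiberwise_of_maps_to (fun v _ => mem_range.2 (col v).is_lt) f).symm

theorem cost_le (hlam : ∀ i, lam i ≤ 2) (hf : IsIndepBroadcast (caterpillar k lam) f) :
    cost f ≤ 2 * k + 2 := by
  rw [cost_eq_sum_colWeight, ← sum_filter_ne_zero]
  refine sum_le_two_mul_add_two (fun i hi => ?_) (fun i hi => ?_) fun i hi j hj hij => ?_
  · exact Nat.lt_succ_iff.1 (mem_range.1 (mem_filter.1 hi).1)
  · exact (colWeight_le_add_two hlam hf (mem_filter.1 hi).2).trans (by omega)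
  · exact colWeight_le_dist_add_one hlam hf hij (mem_filter.1 hi).2 (mem_filter.1 hj).2

end Broadcast

end Caterpillar

open Caterpillar in
theorem stmt14 (k : ℕ) (hk : 1 ≤ k) (lam : Fin (k+1) → ℕ)
    (h0 : 0 < lam 0) (hl : 0 < lam (Fin.last k))
    (hlam : ∀ i, lam i ≤ 2) :
    betaB (caterpillar k lam) = 2 * k + 2 ∧
    2 * k + 2 = 2 * (gdiam (caterpillar k lam) - 1) := by
  set A : CatV k lam := .inr ⟨0, ⟨0, h0⟩⟩
  set B : CatV k lam := .inr ⟨Fin.last k, ⟨0, hl⟩⟩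
  have hAB : k + 2 ≤ (caterpillar k lam).dist A B := add_two_le_dist_leaf_leaf hk h0 hl
  have hne : A ≠ B := fun h => by rw [h, SimpleGraph.dist_self] at hAB; omega
  have hdiam : gdiam (caterpillar k lam) = k + 2 :=
    le_antisymm (Finset.sup_le fun v _ => ecc_le v)
      (hAB.trans ((dist_le_ecc _ A B).trans (ecc_le_gdiam _ A)))
  refine ⟨betaB_eq_of_forall_cost_le (isIndepBroadcast_pair hne hAB) ?_
    fun g hg => cost_le hlam hg, by omega⟩
  rw [cost_pair hne]
  ring
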